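/- arXiv:2308.00306 — 7 statements merged into one kernel-verified Lean document; each statement's English description precedes it below -/
import Mathlib

section
/- Let a, b ∈ ℝ^d with a ≠ b, and let c be drawn according to a d-dimensional Gaussian distribution with arbitrary mean and covariance σ²·I. Then the probability that the Euclidean distance from c to the line L(a,b) = {a + ξ(b−a) : ξ ∈ ℝ} is at most ε is bounded above by (ε/σ)^{d−1}. -/
open MeasureTheory ProbabilityTheory

/-- The `d`-dimensional spherical Gaussian measure with mean `m` and standard deviation `σ`
(covariance `σ² · I`), as a measure on Euclidean space. -/
noncomputable def gaussPi (d : ℕ) (m : EuclideanSpace ℝ (Fin d)) (σ : ℝ) :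
    Measure (EuclideanSpace ℝ (Fin d)) :=
  Measure.map (MeasurableEquiv.toLp 2 (Fin d → ℝ))
    (Measure.pi fun i => gaussianReal (m i) ((σ ^ 2).toNNReal))

/-!
Choose an orthonormal basis `B` of `ℝ^d` whose vectors `B 1, …, B (d-1)` are orthogonal to
`b - a`. If `c` is within `ε` of the line, each coordinate `⟪B j, c⟫`, `j ≠ 0`, is within `ε` of
`⟪B j, a⟫`. The spherical Gaussian is rotation invariant (it is an affine image of the standard
Gaussian), so these coordinates are independent `N(⟪B j, m⟫, σ²)` variables, and each lands in an
interval of length `2ε` with probability at most `2ε / √(2πσ²) ≤ ε / σ`.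
-/

open scoped ENNReal NNReal RealInnerProductSpace

namespace ProbabilityTheory

lemma gaussianPDFReal_le_inv_sqrt (μ : ℝ) (v : ℝ≥0) (x : ℝ) :
    gaussianPDFReal μ v x ≤ (√(2 * Real.pi * v))⁻¹ := by
  rw [gaussianPDFReal]
  refine mul_le_of_le_one_right (by positivity) (Real.exp_le_one_iff.2 ?_)
  rw [neg_div]
  exact neg_nonpos.2 (by positivity)

lemma gaussianReal_le_mul_volume (μ : ℝ) {v : ℝ≥0} (hv : v ≠ 0) (s : Set ℝ) :
    gaussianReal μ v s ≤ ENNReal.ofReal (√(2 * Real.pi * v))⁻¹ * volume s := by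
  rw [gaussianReal_apply μ hv, ← setLIntegral_const]
  exact setLIntegral_mono measurable_const fun x _ =>
    ENNReal.ofReal_le_ofReal (gaussianPDFReal_le_inv_sqrt μ v x)

lemma gaussianReal_Icc_le (μ x : ℝ) {σ ε : ℝ} (hσ : 0 < σ) (hε : 0 ≤ ε) :
    gaussianReal μ (σ ^ 2).toNNReal (Set.Icc (x - ε) (x + ε)) ≤ ENNReal.ofReal (ε / σ) := by
  refine (gaussianReal_le_mul_volume μ (by positivity) _).trans ?_
  rw [Real.volume_Icc, ← ENNReal.ofReal_mul (by positivity)]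
  refine ENNReal.ofReal_le_ofReal ?_
  have h_two_le : 2 * σ ≤ √(2 * Real.pi * (σ ^ 2).toNNReal) := by
    rw [Real.coe_toNNReal _ (sq_nonneg σ), Real.sqrt_mul (by positivity), Real.sqrt_sq hσ.le]
    refine mul_le_mul_of_nonneg_right (Real.le_sqrt_of_sq_le ?_) hσ.le
    nlinarith [Real.pi_gt_three]
  calc (√(2 * Real.pi * (σ ^ 2).toNNReal))⁻¹ * (x + ε - (x - ε)) ≤ (2 * σ)⁻¹ * (2 * ε) := by
        rw [add_sub_sub_cancel, ← two_mul]
        gcongr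
    _ = ε / σ := by field_simp

lemma gaussianReal_map_const_add_mul (μ σ : ℝ) :
    (gaussianReal 0 1).map (fun x => μ + σ * x) = gaussianReal μ (σ ^ 2).toNNReal := by
  have h_comp : (fun x => μ + σ * x) = (μ + ·) ∘ (σ * ·) := rfl
  rw [h_comp, ← Measure.map_map (by fun_prop) (by fun_prop), gaussianReal_map_const_mul,
    gaussianReal_map_const_add]
  congr 1
  · ring
  · ext
    simp [sq_nonneg]

end ProbabilityTheory

instance isProbabilityMeasure_gaussPi (d : ℕ) (m : EuclideanSpace ℝ (Fin d)) (σ : ℝ) :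
    IsProbabilityMeasure (gaussPi d m σ) :=
  Measure.isProbabilityMeasure_map (MeasurableEquiv.toLp 2 (Fin d → ℝ)).measurable.aemeasurable

lemma gaussPi_eq_map_stdGaussian (d : ℕ) (m : EuclideanSpace ℝ (Fin d)) (σ : ℝ) :
    gaussPi d m σ = (stdGaussian _).map (fun x => m + σ • x) := by
  rw [← map_pi_eq_stdGaussian, Measure.map_map (by fun_prop) (by fun_prop), gaussPi]
  simp_rw [← gaussianReal_map_const_add_mul]
  rw [← Measure.pi_map_pi (fun _ => by fun_prop), MeasurableEquiv.coe_toLp,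
    Measure.map_map (by fun_prop) (by fun_prop)]
  rfl

lemma map_gaussPi_inner_orthonormalBasis {d : ℕ} {ι : Type*} [Fintype ι]
    (B : OrthonormalBasis ι ℝ (EuclideanSpace ℝ (Fin d))) (m : EuclideanSpace ℝ (Fin d)) (σ : ℝ) :
    (gaussPi d m σ).map (fun c j => ⟪B j, c⟫) =
      Measure.pi fun j => gaussianReal ⟪B j, m⟫ (σ ^ 2).toNNReal := by
  rw [gaussPi_eq_map_stdGaussian, stdGaussian_eq_map_pi_orthonormalBasis B,
    Measure.map_map (by fun_prop) (by fun_prop), Measure.map_map (by fun_prop) (by fun_prop)]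
  simp_rw [← gaussianReal_map_const_add_mul]
  rw [← Measure.pi_map_pi (fun _ => by fun_prop)]
  congr 1
  ext y j
  simp [← B.repr_apply_apply, B.sum_repr_symm]

lemma abs_inner_sub_le_infDist_line {E : Type*} [NormedAddCommGroup E] [InnerProductSpace ℝ E]
    {w a b : E} (hw : ‖w‖ = 1) (hwab : ⟪w, b - a⟫ = 0) (c : E) :
    |⟪w, c - a⟫| ≤ Metric.infDist c {p | ∃ ξ : ℝ, p = a + ξ • (b - a)} := by
  refine (Metric.le_infDist (s := {p | ∃ ξ : ℝ, p = a + ξ • (b - a)}) ⟨a, 0, by simp⟩).2 ?_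
  rintro _ ⟨ξ, rfl⟩
  have h_shift : ⟪w, c - a⟫ = ⟪w, c - (a + ξ • (b - a))⟫ := by
    rw [sub_add_eq_sub_sub, inner_sub_right _ (c - a), inner_smul_right, hwab, mul_zero, sub_zero]
  rw [h_shift, dist_eq_norm]
  exact (abs_real_inner_le_norm _ _).trans_eq (by rw [hw, one_mul])

lemma exists_orthonormalBasis_inner_succ_eq_zero {E : Type*} [NormedAddCommGroup E]
    [InnerProductSpace ℝ E] [FiniteDimensional ℝ E] {n : ℕ} (hn : Module.finrank ℝ E = n + 1)
    (v : E) : ∃ B : OrthonormalBasis (Fin (n + 1)) ℝ E, ∀ j : Fin n, ⟪B j.succ, v⟫ = 0 :=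
  ⟨InnerProductSpace.gramSchmidtOrthonormalBasis (by simpa using hn) fun _ => v,
    fun j => InnerProductSpace.gramSchmidtOrthonormalBasis_inv_triangular _ _ j.succ_pos⟩

theorem stmt1_general (d : ℕ) (σ ε : ℝ) (hσ : 0 < σ) (hε : 0 ≤ ε)
    (m a b : EuclideanSpace ℝ (Fin d)) :
    gaussPi d m σ
        {c | Metric.infDist c {p | ∃ ξ : ℝ, p = a + ξ • (b - a)} ≤ ε}
      ≤ ENNReal.ofReal ((ε / σ) ^ (d - 1)) := by
  cases d with
  | zero => simpa using prob_le_one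
  | succ n =>
  obtain ⟨B, hB⟩ := exists_orthonormalBasis_inner_succ_eq_zero finrank_euclideanSpace_fin (b - a)
  let s : Fin (n + 1) → Set ℝ :=
    Fin.cons Set.univ fun j => Set.Icc (⟪B j.succ, a⟫ - ε) (⟪B j.succ, a⟫ + ε)
  have hs : MeasurableSet (Set.univ.pi s) :=
    .univ_pi fun j => Fin.cases MeasurableSet.univ (fun _ => measurableSet_Icc) j
  have h_sub : {c | Metric.infDist c {p | ∃ ξ : ℝ, p = a + ξ • (b - a)} ≤ ε} ⊆
      (fun c j => ⟪B j, c⟫) ⁻¹' Set.univ.pi s := by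
    intro c hc j _
    induction j using Fin.cases with
    | zero => trivial
    | succ j =>
      have hj := (abs_inner_sub_le_infDist_line (B.orthonormal.1 _) (hB j) c).trans hc
      rw [inner_sub_right, abs_sub_le_iff] at hj
      exact ⟨by linarith, by linarith⟩
  calc _ ≤ (gaussPi _ m σ).map (fun c j => ⟪B j, c⟫) (Set.univ.pi s) := by
        rw [Measure.map_apply (by fun_prop) hs]
        exact measure_mono h_sub
    _ = ∏ j, gaussianReal ⟪B j, m⟫ (σ ^ 2).toNNReal (s j) := by
        rw [map_gaussPi_inner_orthonormalBasis, Measure.pi_pi]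
    _ ≤ ENNReal.ofReal (ε / σ) ^ n := by
        rw [Fin.prod_univ_succ]
        simp only [s, Fin.cons_zero, Fin.cons_succ, measure_univ, one_mul]
        simpa using Finset.prod_le_pow_card (Finset.univ : Finset (Fin n)) _ _
          fun j _ => gaussianReal_Icc_le _ _ hσ hε
    _ = _ := by rw [ENNReal.ofReal_pow (by positivity), Nat.add_sub_cancel]

/-- If `c` is drawn from a `d`-dimensional spherical Gaussian with arbitrary mean and standard
deviation `σ`, and `a ≠ b`, then the probability that `c` is within distance `ε` of the line
through `a` and `b` is at most `(ε/σ)^(d-1)`. -/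
theorem stmt1 (d : ℕ) (hd : 2 ≤ d) (σ ε : ℝ) (hσ : 0 < σ) (hε : 0 ≤ ε)
    (m a b : EuclideanSpace ℝ (Fin d)) (hab : a ≠ b) :
    gaussPi d m σ
        {c | Metric.infDist c {p | ∃ ξ : ℝ, p = a + ξ • (b - a)} ≤ ε}
      ≤ ENNReal.ofReal ((ε / σ) ^ (d - 1)) :=
  stmt1_general d σ ε hσ hε m a b
end

section
/- Let a, b, z ∈ [−D, D]^d with δ = ‖a−b‖₂ > 0, and let x be the Euclidean distance of z from the line through a and b. Then |‖z−a‖₂ − ‖z−b‖₂| ≤ δ − x²δ/(32dD²). -/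
open MeasureTheory ProbabilityTheory

/-!
Let `p` be the orthogonal projection of `z` onto the line, `x = ‖z - p‖`, `δ = ‖a - b‖`, and
`A = ‖z - a‖`, `B = ‖z - b‖`. By Pythagoras `A² = x² + s²` and `B² = x² + (s - δ)²` for the
signed position `s` of `p` along the line. Then `(A - B)(A + B) = δ (2s - δ)`, while
Cauchy–Schwarz in the plane gives `(A + B)² ≥ 4x² + (2s - δ)²`; together these yield
`|A - B| ≤ δ - 2x²δ / (A + B)²`. In the cube `[-D, D]^d` one has `(A + B)² ≤ 16 d D²`.
-/

open RealInnerProductSpace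

theorem abs_sub_le_sub_of_sq_eq_sq_add_sq {A B x s δ : ℝ} (hA0 : 0 ≤ A) (hB0 : 0 ≤ B)
    (hδ : 0 ≤ δ) (hA : A ^ 2 = x ^ 2 + s ^ 2) (hB : B ^ 2 = x ^ 2 + (s - δ) ^ 2) :
    |A - B| ≤ δ - 2 * x ^ 2 * δ / (A + B) ^ 2 := by
  -- Cauchy–Schwarz for the plane vectors `(x, s)` and `(x, s - δ)`, via Lagrange's identity.
  have hprod : x ^ 2 + s * (s - δ) ≤ A * B := by
    have hlagrange : (A * B) ^ 2 = (x ^ 2 + s * (s - δ)) ^ 2 + (x * δ) ^ 2 := by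
      rw [mul_pow, hA, hB]; ring
    exact (abs_le_of_sq_le_sq' (by nlinarith) (mul_nonneg hA0 hB0)).2
  have hsum_sq : 4 * x ^ 2 + |2 * s - δ| ^ 2 ≤ (A + B) ^ 2 := by
    rw [sq_abs]; nlinarith
  have hc : |2 * s - δ| ≤ A + B :=
    (abs_le_of_sq_le_sq' (by nlinarith) (add_nonneg hA0 hB0)).2
  have hdiff : |A - B| * (A + B) = δ * |2 * s - δ| := by
    have : (A - B) * (A + B) = δ * (2 * s - δ) := by linear_combination hA - hB
    rw [← abs_of_nonneg (add_nonneg hA0 hB0), ← abs_mul, this, abs_mul, abs_of_nonneg hδ]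
  rcases (add_nonneg hA0 hB0).eq_or_lt with hS0 | hS0
  · obtain rfl : A = 0 := by linarith
    obtain rfl : B = 0 := by linarith
    simpa using hδ
  · have hgap : 2 * x ^ 2 ≤ (A + B) * (A + B - |2 * s - δ|) := by
      nlinarith [sq_nonneg (A + B - |2 * s - δ|)]
    have hAB : |A - B| = δ - δ * (A + B - |2 * s - δ|) / (A + B) := by
      field_simp
      linarith
    rw [hAB, sub_le_sub_iff_left, div_le_div_iff₀ (by positivity) hS0]
    nlinarith [mul_le_mul_of_nonneg_left hgap (mul_nonneg hδ hS0.le)]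

theorem norm_add_smul_sq_of_inner_eq_zero {E : Type*} [NormedAddCommGroup E]
    [InnerProductSpace ℝ E] {q u : E} (h : ⟪q, u⟫ = 0) (r : ℝ) :
    ‖q + r • u‖ ^ 2 = ‖q‖ ^ 2 + (r * ‖u‖) ^ 2 := by
  rw [norm_add_sq_real, real_inner_smul_right, h, norm_smul, Real.norm_eq_abs, mul_pow, sq_abs,
    mul_pow]
  ring

theorem abs_norm_sub_sub_norm_sub_le {E : Type*} [NormedAddCommGroup E] [InnerProductSpace ℝ E]
    {a b : E} (hab : a ≠ b) (z : E) :
    |‖z - a‖ - ‖z - b‖| ≤ ‖a - b‖ -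
      2 * Metric.infDist z {p | ∃ ξ : ℝ, p = a + ξ • (b - a)} ^ 2 * ‖a - b‖
        / (‖z - a‖ + ‖z - b‖) ^ 2 := by
  have hδ : ‖b - a‖ ≠ 0 := norm_ne_zero_iff.2 (sub_ne_zero.2 hab.symm)
  set t := ⟪z - a, b - a⟫ / ‖b - a‖ ^ 2 with ht
  set p := a + t • (b - a)
  have horth : ⟪z - p, b - a⟫ = 0 := by
    rw [sub_add_eq_sub_sub, inner_sub_left, real_inner_smul_left, real_inner_self_eq_norm_sq, ht,
      div_mul_cancel₀ _ (pow_ne_zero 2 hδ), sub_self]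
  have hp : p ∈ {p | ∃ ξ : ℝ, p = a + ξ • (b - a)} := ⟨t, rfl⟩
  have hdist : Metric.infDist z {p | ∃ ξ : ℝ, p = a + ξ • (b - a)} ≤ ‖z - p‖ :=
    (Metric.infDist_le_dist_of_mem hp).trans_eq (dist_eq_norm _ _)
  refine (abs_sub_le_sub_of_sq_eq_sq_add_sq (norm_nonneg _) (norm_nonneg _) (norm_nonneg (a - b))
    (x := ‖z - p‖) (s := t * ‖b - a‖) ?_ ?_).trans ?_
  · rw [show z - a = z - p + t • (b - a) by simp only [p]; module,
      norm_add_smul_sq_of_inner_eq_zero horth]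
  · rw [show z - b = z - p + (t - 1) • (b - a) by simp only [p]; module,
      norm_add_smul_sq_of_inner_eq_zero horth, norm_sub_rev a b]
    ring
  · gcongr
    exact Metric.infDist_nonneg

theorem EuclideanSpace.norm_sq_le_of_abs_le {ι : Type*} [Fintype ι] {C : ℝ}
    {w : EuclideanSpace ℝ ι} (hw : ∀ i, |w i| ≤ C) : ‖w‖ ^ 2 ≤ Fintype.card ι * C ^ 2 := by
  rw [EuclideanSpace.norm_sq_eq, ← nsmul_eq_mul]
  exact Finset.sum_le_card_nsmul _ _ _ fun i _ ↦ by
    rw [Real.norm_eq_abs]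
    exact pow_le_pow_left₀ (abs_nonneg _) (hw i) 2

theorem EuclideanSpace.norm_sub_sq_le_of_abs_le {ι : Type*} [Fintype ι] {D : ℝ}
    {v w : EuclideanSpace ℝ ι} (hv : ∀ i, |v i| ≤ D) (hw : ∀ i, |w i| ≤ D) :
    ‖v - w‖ ^ 2 ≤ 4 * Fintype.card ι * D ^ 2 := by
  have := norm_sq_le_of_abs_le (w := v - w) fun i ↦ by
    rw [PiLp.sub_apply]
    exact (abs_sub (v i) (w i)).trans (add_le_add (hv i) (hw i))
  linarith

theorem stmt10_general (d : ℕ) (D : ℝ)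
    (a b z : EuclideanSpace ℝ (Fin d))
    (ha : ∀ i, |a i| ≤ D) (hb : ∀ i, |b i| ≤ D) (hz : ∀ i, |z i| ≤ D)
    (hab : a ≠ b) :
    |‖z - a‖ - ‖z - b‖| ≤ ‖a - b‖ -
      (Metric.infDist z {p | ∃ ξ : ℝ, p = a + ξ • (b - a)}) ^ 2 * ‖a - b‖
        / (32 * d * D ^ 2) := by
  have hS_pos : 0 < ‖z - a‖ + ‖z - b‖ := by
    have := norm_sub_le_norm_sub_add_norm_sub a z b
    rw [norm_sub_rev a z] at this
    exact (norm_pos_iff.2 (sub_ne_zero.2 hab)).trans_le this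
  have hS_sq : (‖z - a‖ + ‖z - b‖) ^ 2 ≤ 16 * d * D ^ 2 := by
    have hza := EuclideanSpace.norm_sub_sq_le_of_abs_le hz ha
    have hzb := EuclideanSpace.norm_sub_sq_le_of_abs_le hz hb
    rw [Fintype.card_fin] at hza hzb
    nlinarith [sq_nonneg (‖z - a‖ - ‖z - b‖)]
  refine (abs_norm_sub_sub_norm_sub_le hab z).trans (sub_le_sub_left ?_ _)
  have hnum : 0 ≤ Metric.infDist z {p | ∃ ξ : ℝ, p = a + ξ • (b - a)} ^ 2 * ‖a - b‖ := by
    positivity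
  rw [div_le_div_iff₀ (by nlinarith) (by positivity)]
  nlinarith [mul_le_mul_of_nonneg_left hS_sq hnum]

/-- For points `a, b, z ∈ [-D,D]^d` with `δ = ‖a-b‖ > 0`, if `x` is the distance of `z` from the
line through `a` and `b`, then `|‖z-a‖ - ‖z-b‖| ≤ δ - x²δ/(32dD²)`. -/
theorem stmt10 (d : ℕ) (hd : 1 ≤ d) (D : ℝ) (hD : 0 < D)
    (a b z : EuclideanSpace ℝ (Fin d))
    (ha : ∀ i, |a i| ≤ D) (hb : ∀ i, |b i| ≤ D) (hz : ∀ i, |z i| ≤ D)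
    (hab : a ≠ b) :
    |‖z - a‖ - ‖z - b‖| ≤ ‖a - b‖ -
      (Metric.infDist z {p | ∃ ξ : ℝ, p = a + ξ • (b - a)}) ^ 2 * ‖a - b‖
        / (32 * d * D ^ 2) :=
  stmt10_general d D a b z ha hb hz hab
end

section
/- For x ≥ 0, fixed δ > 0, D > 0, d ≥ 1, define y(η) = √(η²/4 + η²x²/(δ²−η²)) for 0 < η < δ. If additionally η ≤ δ − x²δ/(32dD²) and x ≤ 2√d·D, then the derivative dy/dη satisfies 0 ≤ dy/dη ≤ 1/2 + 32^{3/2}D³d^{3/2}/(δx²). -/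
/-!
With `A = δ² - η²` one has `y² = η² (A + 4x²) / (4A)`, hence
`y' = (A² + 4δ²x²) / (2 A √A √(A + 4x²))`. The `A²` part is at most `1/2` because
`A ≤ A + 4x²`. For the other part use `√(A + 4x²) ≥ 2x`; the hypothesis on `η` gives
`x²δ² ≤ 32dD² · A`, and raising this to the power `3/2` is exactly the remaining bound.
-/

open Real

namespace ProjectionProfile

lemma hasDerivAt_radicand {x δ η : ℝ} (hA : 0 < δ ^ 2 - η ^ 2) :
    HasDerivAt (fun t => t ^ 2 / 4 + t ^ 2 * x ^ 2 / (δ ^ 2 - t ^ 2))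
      (η / 2 + 2 * η * x ^ 2 * δ ^ 2 / (δ ^ 2 - η ^ 2) ^ 2) η := by
  have hsq : HasDerivAt (fun t : ℝ => t ^ 2) (2 * η) η := by simpa using hasDerivAt_pow 2 η
  refine ((hsq.div_const 4).add ((hsq.mul_const _).div (hsq.const_sub _) hA.ne')).congr_deriv ?_
  field_simp
  ring

lemma radicand_eq_sq {x δ η : ℝ} (hA : 0 < δ ^ 2 - η ^ 2) :
    η ^ 2 / 4 + η ^ 2 * x ^ 2 / (δ ^ 2 - η ^ 2)
      = (η * √(δ ^ 2 - η ^ 2 + 4 * x ^ 2) / (2 * √(δ ^ 2 - η ^ 2))) ^ 2 := by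
  rw [div_pow, mul_pow, mul_pow, sq_sqrt (by positivity), sq_sqrt hA.le]
  field_simp
  ring

lemma hasDerivAt_sqrt_radicand {x δ η : ℝ} (hη : 0 < η) (hA : 0 < δ ^ 2 - η ^ 2) :
    HasDerivAt (fun t => √(t ^ 2 / 4 + t ^ 2 * x ^ 2 / (δ ^ 2 - t ^ 2)))
      (((δ ^ 2 - η ^ 2) ^ 2 + 4 * δ ^ 2 * x ^ 2) /
        (2 * (δ ^ 2 - η ^ 2) * √(δ ^ 2 - η ^ 2) * √(δ ^ 2 - η ^ 2 + 4 * x ^ 2))) η := by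
  have hs : 0 < √(δ ^ 2 - η ^ 2 + 4 * x ^ 2) := sqrt_pos.mpr (by positivity)
  have hsA : 0 < √(δ ^ 2 - η ^ 2) := sqrt_pos.mpr hA
  have hval : √(η ^ 2 / 4 + η ^ 2 * x ^ 2 / (δ ^ 2 - η ^ 2))
      = η * √(δ ^ 2 - η ^ 2 + 4 * x ^ 2) / (2 * √(δ ^ 2 - η ^ 2)) := by
    rw [radicand_eq_sq hA, sqrt_sq (by positivity)]
  refine ((hasDerivAt_radicand hA).sqrt ?_).congr_deriv ?_
  · rw [radicand_eq_sq hA]; positivity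
  · rw [hval]
    have := sq_sqrt hA.le
    field_simp
    rw [this]
    ring

lemma mul_sqrt_le_mul_sqrt {a b : ℝ} (ha : 0 ≤ a) (hab : a ≤ b) : a * √a ≤ b * √b :=
  mul_le_mul hab (sqrt_le_sqrt hab) (sqrt_nonneg a) (ha.trans hab)

lemma rpow_three_halves {a : ℝ} (ha : 0 ≤ a) : a ^ (3 / 2 : ℝ) = a * √a := by
  rw [show (3 / 2 : ℝ) = 1 + 1 / 2 by norm_num, rpow_add' ha (by norm_num), rpow_one,
    sqrt_eq_rpow]

lemma div_le_half {A x : ℝ} (hA : 0 < A) :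
    A ^ 2 / (2 * A * √A * √(A + 4 * x ^ 2)) ≤ 1 / 2 := by
  have hAx : √A ≤ √(A + 4 * x ^ 2) := sqrt_le_sqrt (by nlinarith)
  have hsA : 0 < √A := sqrt_pos.mpr hA
  rw [div_le_iff₀ (by positivity)]
  calc A ^ 2 = A * (√A * √A) := by rw [mul_self_sqrt hA.le]; ring
    _ ≤ A * (√A * √(A + 4 * x ^ 2)) := by gcongr
    _ = 1 / 2 * (2 * A * √A * √(A + 4 * x ^ 2)) := by ring

lemma div_le_mul_sqrt_div {A x δ K : ℝ} (hA : 0 < A) (hx : 0 ≤ x) (hδ : 0 < δ) (hK : 0 ≤ K)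
    (h : (x * δ) ^ 2 ≤ K * A) :
    4 * δ ^ 2 * x ^ 2 / (2 * A * √A * √(A + 4 * x ^ 2)) ≤ K * √K / (δ * x ^ 2) := by
  rcases hx.eq_or_lt with rfl | hx
  · simp
  have hsA : 0 < √A := sqrt_pos.mpr hA
  have h2x : 2 * x ≤ √(A + 4 * x ^ 2) :=
    le_sqrt_of_sq_le (by nlinarith)
  have hcube : (x * δ) ^ 2 * √((x * δ) ^ 2) ≤ K * A * √(K * A) :=
    mul_sqrt_le_mul_sqrt (sq_nonneg _) h
  rw [sqrt_sq (by positivity), sqrt_mul hK] at hcube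
  calc 4 * δ ^ 2 * x ^ 2 / (2 * A * √A * √(A + 4 * x ^ 2))
      ≤ 4 * δ ^ 2 * x ^ 2 / (2 * A * √A * (2 * x)) := by gcongr
    _ = δ ^ 2 * x / (A * √A) := by field_simp; norm_num
    _ ≤ K * √K / (δ * x ^ 2) := by
      rw [div_le_div_iff₀ (by positivity) (by positivity)]
      linear_combination hcube

lemma sq_mul_le_of_le_sub_div {x δ η K : ℝ} (hK : 0 < K) (hδ : 0 ≤ δ) (hη : 0 ≤ η)
    (h : η ≤ δ - x ^ 2 * δ / K) : (x * δ) ^ 2 ≤ K * (δ ^ 2 - η ^ 2) := by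
  have hgap : x ^ 2 * δ ≤ K * (δ - η) := by
    rw [← div_le_iff₀' hK]; linarith
  have hgap0 : 0 ≤ K * (δ - η) := le_trans (by positivity) hgap
  calc (x * δ) ^ 2 = x ^ 2 * δ * δ := by ring
    _ ≤ K * (δ - η) * δ := by gcongr
    _ ≤ K * (δ - η) * (δ + η) := by gcongr; linarith
    _ = K * (δ ^ 2 - η ^ 2) := by ring

lemma thirtyTwo_rpow_mul_eq {d D : ℝ} (hd : 0 ≤ d) (hD : 0 ≤ D) :
    32 ^ (3 / 2 : ℝ) * D ^ 3 * d ^ (3 / 2 : ℝ) = 32 * d * D ^ 2 * √(32 * d * D ^ 2) := by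
  rw [rpow_three_halves (by norm_num), rpow_three_halves hd, sqrt_mul (by positivity),
    sqrt_mul (by norm_num), sqrt_sq hD]
  ring

end ProjectionProfile

open ProjectionProfile

theorem stmt11_general (d : ℕ) (hd : 1 ≤ d) (x δ D : ℝ) (hx : 0 ≤ x) (hδ : 0 < δ) (hD : 0 < D)
    (η : ℝ) (hη0 : 0 < η) (hηδ : η < δ)
    (hη2 : η ≤ δ - x ^ 2 * δ / (32 * d * D ^ 2)) :
    0 ≤ deriv (fun t => Real.sqrt (t ^ 2 / 4 + t ^ 2 * x ^ 2 / (δ ^ 2 - t ^ 2))) η ∧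
    deriv (fun t => Real.sqrt (t ^ 2 / 4 + t ^ 2 * x ^ 2 / (δ ^ 2 - t ^ 2))) η
      ≤ 1 / 2 + 32 ^ ((3 : ℝ) / 2) * D ^ 3 * (d : ℝ) ^ ((3 : ℝ) / 2) / (δ * x ^ 2) := by
  have hd0 : (0 : ℝ) < d := by exact_mod_cast hd
  have hA : 0 < δ ^ 2 - η ^ 2 := by nlinarith
  rw [(hasDerivAt_sqrt_radicand hη0 hA).deriv, thirtyTwo_rpow_mul_eq hd0.le hD.le, add_div]
  refine ⟨by positivity, add_le_add (div_le_half hA) (div_le_mul_sqrt_div hA hx hδ ?_ ?_)⟩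
  · positivity
  · exact sq_mul_le_of_le_sub_div (by positivity) hδ.le hη0.le hη2

/-- Let `y(η) = √(η²/4 + η²x²/(δ²-η²))` for `0 < η < δ`. If moreover
`η ≤ δ - x²δ/(32dD²)` and `x ≤ 2√d·D`, then
`0 ≤ y'(η) ≤ 1/2 + 32^{3/2}·D³·d^{3/2}/(δx²)`. -/
theorem stmt11 (d : ℕ) (hd : 1 ≤ d) (x δ D : ℝ) (hx : 0 ≤ x) (hδ : 0 < δ) (hD : 0 < D)
    (η : ℝ) (hη0 : 0 < η) (hηδ : η < δ)
    (hη2 : η ≤ δ - x ^ 2 * δ / (32 * d * D ^ 2))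
    (hx2 : x ≤ 2 * Real.sqrt d * D) :
    0 ≤ deriv (fun t => Real.sqrt (t ^ 2 / 4 + t ^ 2 * x ^ 2 / (δ ^ 2 - t ^ 2))) η ∧
    deriv (fun t => Real.sqrt (t ^ 2 / 4 + t ^ 2 * x ^ 2 / (δ ^ 2 - t ^ 2))) η
      ≤ 1 / 2 + 32 ^ ((3 : ℝ) / 2) * D ^ 3 * (d : ℝ) ^ ((3 : ℝ) / 2) / (δ * x ^ 2) :=
  stmt11_general d hd x δ D hx hδ hD η hη0 hηδ hη2
end

section
/- Let c ∈ [0,σ]^d and k = (k₁,…,k_d) ∈ ℕ₀^d. Let Y be a random variable distributed as X ~ N(c, σ²·I) conditioned on X ∈ Q := [k₁σ,(k₁+1)σ] × ⋯ × [k_dσ,(k_d+1)σ]. Then the probability density function of Y is bounded above by exp(‖k‖₁ + (3/2)d) · σ^{-d} on Q. -/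
/-!
For `c ∈ [0, σ]` and `x, y ∈ [kσ, (k + 1)σ]` one has `(y - c)² - (x - c)² ≤ 2(k + 1)σ²`, so on
such an interval the one-dimensional Gaussian density varies by a factor at most `exp(k + 1)`.
Averaging over `y` bounds the density at `x` by `exp(k + 1)/σ` times the mass of the interval.
The spherical Gaussian is the product of its coordinate laws, so its density on the cube is
bounded by the product of these bounds times the mass of the cube, which is a bound on the
conditional density.
-/

open MeasureTheory ProbabilityTheory
open scoped ENNReal NNReal

theorem measurable_fintype_prod_apply {ι E : Type*} [Fintype ι] [MeasurableSpace E]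
    {f : ι → E → ℝ≥0∞} (hf : ∀ i, Measurable (f i)) :
    Measurable fun x : ι → E ↦ ∏ i, f i (x i) :=
  Finset.measurable_prod _ fun i _ ↦ (hf i).comp (measurable_pi_apply i)

theorem MeasureTheory.lintegral_fin_nat_prod_eq_prod {E : Type*} [MeasurableSpace E] :
    ∀ {n : ℕ} {μ : Fin n → Measure E} [∀ i, SigmaFinite (μ i)] {f : Fin n → E → ℝ≥0∞},
      (∀ i, Measurable (f i)) → ∫⁻ x, ∏ i, f i (x i) ∂(Measure.pi μ) = ∏ i, ∫⁻ t, f i t ∂(μ i)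
  | 0, _, _, _, _ => by simp
  | n + 1, μ, _, f, hf => by
    rw [← ((measurePreserving_piFinSuccAbove μ 0).symm).lintegral_comp
      (measurable_fintype_prod_apply hf)]
    simp_rw [MeasurableEquiv.piFinSuccAbove_symm_apply, Fin.prod_univ_succ, Fin.insertNthEquiv,
      Equiv.coe_fn_mk, Fin.insertNth_zero', Fin.cons_zero, Fin.cons_succ, Fin.succAbove_zero]
    rw [lintegral_prod_mul (f := f 0) (g := fun z : Fin n → E ↦ ∏ j, f j.succ (z j))
      (hf 0).aemeasurable (measurable_fintype_prod_apply fun j : Fin n ↦ hf j.succ).aemeasurable,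
      lintegral_fin_nat_prod_eq_prod fun j ↦ hf j.succ]

theorem MeasureTheory.lintegral_fintype_prod_eq_prod {ι E : Type*} [Fintype ι] [MeasurableSpace E]
    {μ : ι → Measure E} [∀ i, SigmaFinite (μ i)] {f : ι → E → ℝ≥0∞} (hf : ∀ i, Measurable (f i)) :
    ∫⁻ x, ∏ i, f i (x i) ∂(Measure.pi μ) = ∏ i, ∫⁻ t, f i t ∂(μ i) := by
  let e := (Fintype.equivFin ι).symm
  rw [← (measurePreserving_piCongrLeft μ e).lintegral_comp (measurable_fintype_prod_apply hf)]
  simp_rw [← e.prod_comp, MeasurableEquiv.coe_piCongrLeft, Equiv.piCongrLeft_apply_apply]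
  exact lintegral_fin_nat_prod_eq_prod fun i ↦ hf _

theorem MeasureTheory.Measure.pi_withDensity {ι E : Type*} [Fintype ι] [MeasurableSpace E]
    {μ : ι → Measure E} [∀ i, SigmaFinite (μ i)] {f : ι → E → ℝ≥0∞} (hf : ∀ i, Measurable (f i))
    [∀ i, SigmaFinite ((μ i).withDensity (f i))] :
    Measure.pi (fun i ↦ (μ i).withDensity (f i))
      = (Measure.pi μ).withDensity (fun x ↦ ∏ i, f i (x i)) := by
  classical
  refine Measure.pi_eq fun s hs ↦ ?_
  have hind : (Set.univ.pi s).indicator (fun x ↦ ∏ i, f i (x i))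
      = fun x ↦ ∏ i, (s i).indicator (f i) (x i) := by
    ext x
    simp only [Set.indicator, Set.mem_univ_pi]
    split_ifs with h
    · exact Finset.prod_congr rfl fun i _ ↦ (if_pos (h i)).symm
    · obtain ⟨i, hi⟩ := not_forall.mp h
      exact (Finset.prod_eq_zero (Finset.mem_univ i) (if_neg hi)).symm
  rw [withDensity_apply _ (.univ_pi hs), ← lintegral_indicator (.univ_pi hs), hind,
    lintegral_fintype_prod_eq_prod fun i ↦ (hf i).indicator (hs i)]
  simp_rw [lintegral_indicator (hs _), withDensity_apply _ (hs _)]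

theorem sq_sub_le_sq_sub_add_of_mem_Icc {σ c k x y : ℝ} (hk : 0 ≤ k)
    (hc : c ∈ Set.Icc 0 σ) (hx : x ∈ Set.Icc (k * σ) ((k + 1) * σ))
    (hy : y ∈ Set.Icc (k * σ) ((k + 1) * σ)) :
    (y - c) ^ 2 ≤ (x - c) ^ 2 + 2 * σ ^ 2 * (k + 1) := by
  obtain ⟨hc₀, hcσ⟩ := hc
  obtain ⟨hx₀, hx₁⟩ := hx
  obtain ⟨hy₀, hy₁⟩ := hy
  have hσ : 0 ≤ σ := hc₀.trans hcσ
  -- `(y - c)² - (x - c)² = (y - x)(y + x - 2c)` with `|y - x| ≤ σ` and `|y + x - 2c| ≤ 2(k + 1)σ`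
  nlinarith [mul_nonneg (sub_nonneg.2 (show y - x ≤ σ by linarith))
      (show 0 ≤ 2 * (k + 1) * σ + (y + x - 2 * c) by nlinarith),
    mul_nonneg (sub_nonneg.2 (show x - y ≤ σ by linarith))
      (show 0 ≤ 2 * (k + 1) * σ - (y + x - 2 * c) by nlinarith)]

theorem ProbabilityTheory.gaussianPDF_le_exp_mul {μ : ℝ} {v : ℝ≥0} (hv : v ≠ 0) {x y t : ℝ}
    (h : (y - μ) ^ 2 ≤ (x - μ) ^ 2 + 2 * v * t) :
    gaussianPDF μ v x ≤ ENNReal.ofReal (Real.exp t) * gaussianPDF μ v y := by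
  rw [gaussianPDF, gaussianPDF, ← ENNReal.ofReal_mul (Real.exp_pos t).le, gaussianPDFReal,
    gaussianPDFReal, mul_left_comm, ← Real.exp_add]
  gcongr
  have hv' : (0 : ℝ) < 2 * v := by positivity
  rw [add_div' _ _ _ hv'.ne', div_le_div_iff_of_pos_right hv']
  linarith

theorem MeasureTheory.mul_measure_le_withDensity_apply {α : Type*} [MeasurableSpace α]
    {μ : Measure α} {f : α → ℝ≥0∞} (hf : Measurable f) {s : Set α} (hs : MeasurableSet s)
    {a b : ℝ≥0∞} (h : ∀ y ∈ s, b ≤ a * f y) :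
    b * μ s ≤ a * μ.withDensity f s := by
  rw [withDensity_apply _ hs, ← lintegral_const_mul _ hf, ← setLIntegral_const]
  exact setLIntegral_mono' hs h

theorem ProbabilityTheory.gaussianPDF_le_mul_gaussianReal_Icc {σ c k x : ℝ} (hσ : 0 < σ)
    (hk : 0 ≤ k) (hc : c ∈ Set.Icc 0 σ) (hx : x ∈ Set.Icc (k * σ) ((k + 1) * σ)) :
    gaussianPDF c (σ ^ 2).toNNReal x
      ≤ ENNReal.ofReal (Real.exp (k + 1) / σ)
        * gaussianReal c (σ ^ 2).toNNReal (Set.Icc (k * σ) ((k + 1) * σ)) := by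
  have hv : (σ ^ 2).toNNReal ≠ 0 := by simpa using hσ.ne'
  have hvol : volume (Set.Icc (k * σ) ((k + 1) * σ)) = ENNReal.ofReal σ := by
    rw [Real.volume_Icc]; ring_nf
  have key := mul_measure_le_withDensity_apply (μ := volume) (measurable_gaussianPDF c _)
    measurableSet_Icc fun y hy ↦ gaussianPDF_le_exp_mul hv (t := k + 1) <| by
      rw [Real.coe_toNNReal _ (sq_nonneg σ)]
      exact sq_sub_le_sq_sub_add_of_mem_Icc hk hc hx hy
  rw [← gaussianReal_of_var_ne_zero _ hv, hvol] at key
  rw [ENNReal.ofReal_div_of_pos hσ, ← ENNReal.mul_div_right_comm,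
    ENNReal.le_div_iff_mul_le (by simp [hσ]) (by simp)]
  exact key

theorem ProbabilityTheory.cond_le_of_eq_withDensity {α : Type*} [MeasurableSpace α]
    {μ ν : Measure α} {f : α → ℝ≥0∞} (hν : ν = μ.withDensity f) {s t : Set α}
    (hs : MeasurableSet s) (ht : MeasurableSet t) {a : ℝ≥0∞} (hf : ∀ x ∈ s, f x ≤ a * ν s) :
    ν[|s] t ≤ a * μ t := by
  have hst : ν (s ∩ t) ≤ a * ν s * μ t :=
    calc ν (s ∩ t) = ∫⁻ x in s ∩ t, f x ∂μ := by rw [hν, withDensity_apply _ (hs.inter ht)]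
      _ ≤ ∫⁻ _ in s ∩ t, a * ν s ∂μ := setLIntegral_mono' (hs.inter ht) fun x hx ↦ hf x hx.1
      _ ≤ a * ν s * μ t := by
        rw [setLIntegral_const]; gcongr; exact Set.inter_subset_right
  calc ν[|s] t = (ν s)⁻¹ * ν (s ∩ t) := cond_apply hs ν t
    _ ≤ (ν s)⁻¹ * (a * ν s * μ t) := by gcongr
    _ = ((ν s)⁻¹ * ν s) * (a * μ t) := by ring
    _ ≤ a * μ t := mul_le_of_le_one_left' (ENNReal.inv_mul_le_one _)

theorem ProbabilityTheory.cond_map_measurableEquiv_apply {α β : Type*} [MeasurableSpace α]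
    [MeasurableSpace β] (e : α ≃ᵐ β) (μ : Measure α) {s : Set β} (hs : MeasurableSet s)
    (t : Set β) : (μ.map e)[|s] t = μ[|e ⁻¹' s] (e ⁻¹' t) := by
  rw [cond_apply hs, cond_apply (e.measurable hs), e.map_apply, e.map_apply, Set.preimage_inter]

theorem ProbabilityTheory.pi_gaussianReal_eq_withDensity {ι : Type*} [Fintype ι] (m : ι → ℝ)
    {v : ℝ≥0} (hv : v ≠ 0) :
    Measure.pi (fun i ↦ gaussianReal (m i) v)
      = volume.withDensity fun x ↦ ∏ i, gaussianPDF (m i) v (x i) := by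
  have hfactor i : gaussianReal (m i) v = volume.withDensity (gaussianPDF (m i) v) :=
    gaussianReal_of_var_ne_zero _ hv
  have (i : ι) : SigmaFinite (volume.withDensity (gaussianPDF (m i) v)) :=
    hfactor i ▸ inferInstance
  simp_rw [hfactor, volume_pi]
  exact Measure.pi_withDensity fun i ↦ measurable_gaussianPDF _ _

theorem ProbabilityTheory.prod_gaussianPDF_le_mul_pi_gaussianReal_Icc {ι : Type*} [Fintype ι]
    {σ : ℝ} (hσ : 0 < σ) {c k : ι → ℝ} (hk : ∀ i, 0 ≤ k i) (hc : ∀ i, c i ∈ Set.Icc 0 σ)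
    {x : ι → ℝ} (hx : x ∈ Set.univ.pi fun i ↦ Set.Icc (k i * σ) ((k i + 1) * σ)) :
    ∏ i, gaussianPDF (c i) (σ ^ 2).toNNReal (x i)
      ≤ (∏ i, ENNReal.ofReal (Real.exp (k i + 1) / σ))
        * Measure.pi (fun i ↦ gaussianReal (c i) (σ ^ 2).toNNReal)
            (Set.univ.pi fun i ↦ Set.Icc (k i * σ) ((k i + 1) * σ)) := by
  rw [Measure.pi_pi, ← Finset.prod_mul_distrib]
  exact Finset.prod_le_prod' fun i _ ↦
    gaussianPDF_le_mul_gaussianReal_Icc hσ (hk i) (hc i) (hx i trivial)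

theorem gaussPi_cond_apply (d : ℕ) (m : EuclideanSpace ℝ (Fin d)) (σ : ℝ) {I : Fin d → Set ℝ}
    (hI : ∀ i, MeasurableSet (I i)) (S : Set (EuclideanSpace ℝ (Fin d))) :
    (gaussPi d m σ)[|{x | ∀ i, x i ∈ I i}] S
      = (Measure.pi fun i ↦ gaussianReal (m i) (σ ^ 2).toNNReal)[|Set.univ.pi I]
          (WithLp.toLp 2 ⁻¹' S) := by
  have hQ : WithLp.toLp 2 ⁻¹' {x : EuclideanSpace ℝ (Fin d) | ∀ i, x i ∈ I i} = Set.univ.pi I := by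
    ext; simp
  rw [gaussPi, cond_map_measurableEquiv_apply, MeasurableEquiv.coe_toLp, hQ]
  rw [← (MeasurableEquiv.toLp 2 (Fin d → ℝ)).measurableSet_preimage, MeasurableEquiv.coe_toLp, hQ]
  exact .univ_pi hI

theorem stmt12_general (d : ℕ) (σ : ℝ) (hσ : 0 < σ)
    (c : EuclideanSpace ℝ (Fin d)) (hc : ∀ i, c i ∈ Set.Icc (0 : ℝ) σ)
    (k : Fin d → ℕ)
    (S : Set (EuclideanSpace ℝ (Fin d))) (hS : MeasurableSet S) :
    (gaussPi d c σ)[|{x | ∀ i, x i ∈ Set.Icc ((k i : ℝ) * σ) ((k i + 1 : ℝ) * σ)}] S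
      ≤ ENNReal.ofReal (Real.exp ((∑ i, (k i : ℝ)) + (3 / 2) * d) / σ ^ d)
          * volume S := by
  have hv : (σ ^ 2).toNNReal ≠ 0 := by simpa using hσ.ne'
  have hconst : ∏ i, ENNReal.ofReal (Real.exp (k i + 1) / σ)
      = ENNReal.ofReal (Real.exp ((∑ i, (k i : ℝ)) + d) / σ ^ d) := by
    rw [← ENNReal.ofReal_prod_of_nonneg fun i _ ↦ by positivity, Finset.prod_div_distrib,
      ← Real.exp_sum, Finset.sum_add_distrib]
    simp
  rw [gaussPi_cond_apply d c σ (fun _ ↦ measurableSet_Icc)]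
  calc _ ≤ (∏ i, ENNReal.ofReal (Real.exp (k i + 1) / σ)) * volume (WithLp.toLp 2 ⁻¹' S) :=
        cond_le_of_eq_withDensity (pi_gaussianReal_eq_withDensity _ hv)
          (.univ_pi fun _ ↦ measurableSet_Icc) (WithLp.measurable_toLp 2 _ hS) fun x hx ↦
            prod_gaussianPDF_le_mul_pi_gaussianReal_Icc hσ (fun i ↦ (k i).cast_nonneg) hc hx
    _ = ENNReal.ofReal (Real.exp ((∑ i, (k i : ℝ)) + d) / σ ^ d) * volume S := by
        rw [hconst, (PiLp.volume_preserving_toLp (Fin d)).measure_preimage hS.nullMeasurableSet]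
    _ ≤ _ := by gcongr; linarith [(d.cast_nonneg : (0 : ℝ) ≤ d)]

/-- Let `c ∈ [0,σ]^d` and `k ∈ ℕ₀^d`, and let `Y` be `X ~ N(c, σ²I)` conditioned on lying in the
cube `Q = ∏ᵢ [kᵢσ, (kᵢ+1)σ]`. Then the density of `Y` is bounded by
`exp(‖k‖₁ + (3/2)d)·σ^{-d}`, i.e. the conditional measure of every measurable set `S` is at most
`exp(‖k‖₁ + (3/2)d)·σ^{-d}·vol(S)`. -/
theorem stmt12 (d : ℕ) (hd : 1 ≤ d) (σ : ℝ) (hσ : 0 < σ)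
    (c : EuclideanSpace ℝ (Fin d)) (hc : ∀ i, c i ∈ Set.Icc (0 : ℝ) σ)
    (k : Fin d → ℕ)
    (S : Set (EuclideanSpace ℝ (Fin d))) (hS : MeasurableSet S) :
    (gaussPi d c σ)[|{x | ∀ i, x i ∈ Set.Icc ((k i : ℝ) * σ) ((k i + 1 : ℝ) * σ)}] S
      ≤ ENNReal.ofReal (Real.exp ((∑ i, (k i : ℝ)) + (3 / 2) * d) / σ ^ d)
          * volume S :=
  stmt12_general d σ hσ c hc k S hS
end

section
/- Let p, q, r, s ∈ ℝ² with p_y = q_y, r_y = s_y, p_x < q_x, r_x < s_x, and let β ≥ 0. Suppose d(r,s) ≥ d(p,q) + 4β and the vertical distance v = |p_y − r_y| satisfies v ≥ √(d(p,q)·d(r,s) + 4β·d(r,s)) + 2β. Then for all p̃, q̃, r̃, s̃ at Euclidean distance at most β from p, q, r, s respectively, d(p̃,r̃) + d(q̃,s̃) ≥ d(p̃,q̃) + d(r̃,s̃). -/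
set_option maxHeartbeats 800000

lemma euclid2_dist_eq (x y : EuclideanSpace ℝ (Fin 2)) :
    dist x y = Real.sqrt ((x 0 - y 0) ^ 2 + (x 1 - y 1) ^ 2) := by
  rw [EuclideanSpace.dist_eq, Fin.sum_univ_two]
  simp [Real.dist_eq, sq_abs]

lemma euclid2_coord_le (x y : EuclideanSpace ℝ (Fin 2)) (i : Fin 2) :
    |x i - y i| ≤ dist x y := by
  rw [EuclideanSpace.dist_eq, ← Real.sqrt_sq_eq_abs]
  apply Real.sqrt_le_sqrt
  have h := Finset.single_le_sum (f := fun j => dist (x j) (y j) ^ 2)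
    (fun j _ => sq_nonneg _) (Finset.mem_univ i)
  simpa [Real.dist_eq, sq_abs] using h

/-- Minkowski-type bound: `√(W²+a²) + √(W²+b²) ≥ √(4W² + (a-b)²) ≥ T`. -/
lemma sqrt_min2 (W a b T : ℝ) (hW : 0 ≤ W) (hT : 0 ≤ T)
    (hT2 : T ^ 2 ≤ 4 * W ^ 2 + (a - b) ^ 2) :
    T ≤ Real.sqrt (W ^ 2 + a ^ 2) + Real.sqrt (W ^ 2 + b ^ 2) := by
  set A : ℝ := Real.sqrt (W ^ 2 + a ^ 2) with hAdef
  set B : ℝ := Real.sqrt (W ^ 2 + b ^ 2) with hBdef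
  have hA0 : 0 ≤ A := Real.sqrt_nonneg _
  have hB0 : 0 ≤ B := Real.sqrt_nonneg _
  have hA : A ^ 2 = W ^ 2 + a ^ 2 := Real.sq_sqrt (by positivity)
  have hB : B ^ 2 = W ^ 2 + b ^ 2 := Real.sq_sqrt (by positivity)
  have h1 : (W ^ 2 - a * b) ^ 2 ≤ (A * B) ^ 2 := by
    have h : (A * B) ^ 2 = (W ^ 2 + a ^ 2) * (W ^ 2 + b ^ 2) := by
      rw [mul_pow, hA, hB]
    rw [h]
    nlinarith [sq_nonneg (W * (a + b))]
  have hAB : W ^ 2 - a * b ≤ A * B := by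
    nlinarith [mul_nonneg hA0 hB0]
  have hsum : T ^ 2 ≤ (A + B) ^ 2 := by nlinarith
  calc T = Real.sqrt (T ^ 2) := (Real.sqrt_sq hT).symm
    _ ≤ Real.sqrt ((A + B) ^ 2) := Real.sqrt_le_sqrt hsum
    _ = A + B := Real.sqrt_sq (add_nonneg hA0 hB0)

/-- Two horizontal segments `pq` (lower) and `rs`, with `d(r,s) ≥ d(p,q) + 4β` and vertical
distance at least `√(d(p,q)d(r,s) + 4βd(r,s)) + 2β`: for any points `p̃,q̃,r̃,s̃` within distance
`β` of `p,q,r,s` respectively, the 2-change is not improving: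
`d(p̃,r̃) + d(q̃,s̃) ≥ d(p̃,q̃) + d(r̃,s̃)`. -/
theorem stmt14 (β : ℝ) (hβ : 0 ≤ β)
    (p q r s : EuclideanSpace ℝ (Fin 2))
    (hpq : p 1 = q 1) (hrs : r 1 = s 1) (hpqx : p 0 < q 0) (hrsx : r 0 < s 0)
    (hlen : dist p q + 4 * β ≤ dist r s)
    (hv : Real.sqrt (dist p q * dist r s + 4 * β * dist r s) + 2 * β ≤ |p 1 - r 1|)
    (p' q' r' s' : EuclideanSpace ℝ (Fin 2))
    (hp' : dist p' p ≤ β) (hq' : dist q' q ≤ β)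
    (hr' : dist r' r ≤ β) (hs' : dist s' s ≤ β) :
    dist p' q' + dist r' s' ≤ dist p' r' + dist q' s' := by
  have hL1 : dist p q = q 0 - p 0 := by
    rw [euclid2_dist_eq, hpq]
    simp only [sub_self, ne_eq, OfNat.ofNat_ne_zero, not_false_eq_true, zero_pow, add_zero]
    rw [Real.sqrt_sq_eq_abs, abs_sub_comm, abs_of_nonneg (by linarith)]
  have hL2 : dist r s = s 0 - r 0 := by
    rw [euclid2_dist_eq, hrs]
    simp only [sub_self, ne_eq, OfNat.ofNat_ne_zero, not_false_eq_true, zero_pow, add_zero]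
    rw [Real.sqrt_sq_eq_abs, abs_sub_comm, abs_of_nonneg (by linarith)]
  set L1 : ℝ := q 0 - p 0 with hL1def
  set L2 : ℝ := s 0 - r 0 with hL2def
  have hL1pos : 0 < L1 := by simp only [hL1def]; linarith
  have hL2pos : 0 < L2 := by simp only [hL2def]; linarith
  set v : ℝ := |p 1 - r 1| with hvdef
  set W : ℝ := v - 2 * β with hWdef
  have hM : (0:ℝ) ≤ L1 * L2 + 4 * β * L2 := by positivity
  have hWs : Real.sqrt (L1 * L2 + 4 * β * L2) ≤ W := by
    rw [hL1, hL2] at hv; linarith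
  have hW0 : 0 ≤ W := le_trans (Real.sqrt_nonneg _) hWs
  have hW2 : L1 * L2 + 4 * β * L2 ≤ W ^ 2 := by
    nlinarith [Real.sq_sqrt hM, Real.sqrt_nonneg (L1 * L2 + 4 * β * L2)]
  -- coordinate perturbation bounds
  have hp0 := le_trans (euclid2_coord_le p' p 0) hp'
  have hp1 := le_trans (euclid2_coord_le p' p 1) hp'
  have hq0 := le_trans (euclid2_coord_le q' q 0) hq'
  have hq1 := le_trans (euclid2_coord_le q' q 1) hq'
  have hr0 := le_trans (euclid2_coord_le r' r 0) hr'
  have hr1 := le_trans (euclid2_coord_le r' r 1) hr'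
  have hs0 := le_trans (euclid2_coord_le s' s 0) hs'
  have hs1 := le_trans (euclid2_coord_le s' s 1) hs'
  -- vertical separation of perturbed points
  have hvert : ∀ x y : EuclideanSpace ℝ (Fin 2), |x 1 - p 1| ≤ β → |y 1 - r 1| ≤ β →
      W ≤ |x 1 - y 1| := by
    intro x y hx hy
    have h1 : |p 1 - r 1| ≤ |p 1 - x 1| + |x 1 - r 1| := abs_sub_le _ _ _
    have h2 : |x 1 - r 1| ≤ |x 1 - y 1| + |y 1 - r 1| := abs_sub_le _ _ _
    have h3 : |p 1 - x 1| = |x 1 - p 1| := abs_sub_comm _ _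
    simp only [hWdef, hvdef]
    linarith
  have hpr1 : W ≤ |p' 1 - r' 1| := hvert p' r' hp1 hr1
  have hqs1 : W ≤ |q' 1 - s' 1| :=
    hvert q' s' (by rw [hpq]; exact hq1) (by rw [hrs]; exact hs1)
  set a : ℝ := p' 0 - r' 0 with hadef
  set b : ℝ := q' 0 - s' 0 with hbdef
  -- lower bounds on new edges
  have hA1 : W ^ 2 ≤ (p' 1 - r' 1) ^ 2 := by
    have h := pow_le_pow_left₀ hW0 hpr1 2
    rwa [sq_abs] at h
  have hB1 : W ^ 2 ≤ (q' 1 - s' 1) ^ 2 := by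
    have h := pow_le_pow_left₀ hW0 hqs1 2
    rwa [sq_abs] at h
  have hAge : Real.sqrt (W ^ 2 + a ^ 2) ≤ dist p' r' := by
    rw [euclid2_dist_eq p' r']
    exact Real.sqrt_le_sqrt (by rw [hadef]; linarith)
  have hBge : Real.sqrt (W ^ 2 + b ^ 2) ≤ dist q' s' := by
    rw [euclid2_dist_eq q' s']
    exact Real.sqrt_le_sqrt (by rw [hbdef]; linarith)
  -- upper bounds on old edges
  have hPQ : dist p' q' ≤ L1 + 2 * β := by
    have h := dist_triangle4 p' p q q'
    rw [hL1] at h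
    have := dist_comm q q'
    linarith
  have hRS : dist r' s' ≤ L2 + 2 * β := by
    have h := dist_triangle4 r' r s s'
    rw [hL2] at h
    have := dist_comm s s'
    linarith
  -- horizontal gap
  have hgap : L2 - L1 - 4 * β ≤ a - b := by
    have h1 := abs_le.mp hp0
    have h2 := abs_le.mp hq0
    have h3 := abs_le.mp hr0
    have h4 := abs_le.mp hs0
    simp only [hadef, hbdef, hL1def, hL2def]
    obtain ⟨h1a, h1b⟩ := h1; obtain ⟨h2a, h2b⟩ := h2
    obtain ⟨h3a, h3b⟩ := h3; obtain ⟨h4a, h4b⟩ := h4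
    linarith
  have hgap0 : 0 ≤ L2 - L1 - 4 * β := by rw [hL1, hL2] at hlen; linarith
  -- key inequality
  have hT2 : (L1 + L2 + 4 * β) ^ 2 ≤ 4 * W ^ 2 + (a - b) ^ 2 := by
    have h1 : (L2 - L1 - 4 * β) ^ 2 ≤ (a - b) ^ 2 :=
      pow_le_pow_left₀ hgap0 hgap 2
    have hid : (L1 + L2 + 4 * β) ^ 2
        = 4 * (L1 * L2 + 4 * β * L2) + (L2 - L1 - 4 * β) ^ 2 := by ring
    linarith
  have hmain := sqrt_min2 W a b (L1 + L2 + 4 * β) hW0 (by linarith) hT2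
  linarith
end

section
/- Let p₁, p₂, p₃, p₄ ∈ ℝ² be such that for i = 1, 2, 3 the segment p_{i+1} − p_i satisfies |(p_{i+1} − p_i)_y| ≤ (p_{i+1} − p_i)_x. Then d(p₁,p₃) + d(p₂,p₄) ≥ d(p₁,p₂) + d(p₃,p₄), where d denotes Euclidean distance. -/
/-! Two vectors in the cone `|y| ≤ x` have nonnegative inner product, so adding one to the other
cannot shorten it. Applied to the consecutive segments, this gives `d(p₁,p₂) ≤ d(p₁,p₃)` and
`d(p₃,p₄) ≤ d(p₂,p₄)`. -/

open scoped RealInnerProductSpace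

def InRightCone (v : EuclideanSpace ℝ (Fin 2)) : Prop := |v 1| ≤ v 0

lemma norm_le_norm_add_of_inner_nonneg {E : Type*} [NormedAddCommGroup E] [InnerProductSpace ℝ E]
    {a b : E} (h : 0 ≤ ⟪a, b⟫) : ‖a‖ ≤ ‖a + b‖ := by
  have hsq : ‖a‖ ^ 2 ≤ ‖a + b‖ ^ 2 := by
    rw [norm_add_sq_real]
    nlinarith [sq_nonneg ‖b‖]
  exact (pow_le_pow_iff_left₀ (norm_nonneg _) (norm_nonneg _) two_ne_zero).mp hsq

lemma mul_add_mul_nonneg_of_abs_le {x₁ y₁ x₂ y₂ : ℝ} (h₁ : |y₁| ≤ x₁) (h₂ : |y₂| ≤ x₂) :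
    0 ≤ x₁ * x₂ + y₁ * y₂ := by
  have : -(y₁ * y₂) ≤ x₁ * x₂ :=
    calc -(y₁ * y₂) ≤ |y₁| * |y₂| := by rw [← abs_mul]; exact neg_le_abs _
      _ ≤ x₁ * x₂ := mul_le_mul h₁ h₂ (abs_nonneg _) ((abs_nonneg _).trans h₁)
  linarith

lemma InRightCone.inner_nonneg {a b : EuclideanSpace ℝ (Fin 2)} (ha : InRightCone a)
    (hb : InRightCone b) : 0 ≤ ⟪a, b⟫ := by
  simpa [PiLp.inner_apply, Fin.sum_univ_two, mul_comm] using mul_add_mul_nonneg_of_abs_le ha hb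

lemma InRightCone.dist_le {p q r : EuclideanSpace ℝ (Fin 2)} (hpq : InRightCone (q - p))
    (hqr : InRightCone (r - q)) : dist p q ≤ dist p r ∧ dist q r ≤ dist p r := by
  have hsum : (q - p) + (r - q) = r - p := by abel
  have hinner := hpq.inner_nonneg hqr
  rw [dist_comm p q, dist_comm q r, dist_comm p r, dist_eq_norm, dist_eq_norm, dist_eq_norm,
    ← hsum]
  refine ⟨norm_le_norm_add_of_inner_nonneg hinner, ?_⟩
  rw [add_comm]
  exact norm_le_norm_add_of_inner_nonneg (real_inner_comm (q - p) (r - q) ▸ hinner)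

/-- If `p₁,p₂,p₃,p₄ ∈ ℝ²` are such that each consecutive segment `p_{i+1} - p_i` satisfies
`|(p_{i+1}-p_i)_y| ≤ (p_{i+1}-p_i)_x`, then
`d(p₁,p₃) + d(p₂,p₄) ≥ d(p₁,p₂) + d(p₃,p₄)`. -/
theorem stmt15 (p : Fin 4 → EuclideanSpace ℝ (Fin 2))
    (h : ∀ i : Fin 3, |(p i.succ - p i.castSucc) 1| ≤ (p i.succ - p i.castSucc) 0) :
    dist (p 0) (p 1) + dist (p 2) (p 3) ≤ dist (p 0) (p 2) + dist (p 1) (p 3) := by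
  have h₀₁ : InRightCone (p 1 - p 0) := h 0
  have h₁₂ : InRightCone (p 2 - p 1) := h 1
  have h₂₃ : InRightCone (p 3 - p 2) := h 2
  have h₀₂ := (h₀₁.dist_le h₁₂).1
  have h₁₃ := (h₁₂.dist_le h₂₃).2
  linarith
end

section
/- Suppose every tour on a random point set has length at most L with probability at least 1 − 1/n!, and let Δ_min denote the minimum improvement of any improving 2-change. If P(Δ_min ≤ ε) ≤ P·ε for all ε > 0 (for some P with PL ≥ 1), then the expected length T of the longest path in the 2-opt state graph satisfies E[T] = O(P·L·n·log n). -/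
open MeasureTheory Nat
open scoped ENNReal

/-!
Since `T ≤ n!`, `E[T] = ∑_{t=1}^{n!} P(T ≥ t)`. Outside the event `Gᶜ`, of probability at most
`1/n!`, a path of length `t` forces `Δ_min ≤ L/t`; hence `P(T ≥ t) ≤ 1/n! + P·L/t`. Summing,
`E[T] ≤ 1 + P·L·H_{n!} ≤ 1 + P·L·(1 + log n!)`, and `log n! ≤ n log n`.
-/

theorem Finset.sum_Icc_one_ite_le {m N : ℕ} (h : m ≤ N) :
    (∑ t ∈ Finset.Icc 1 N, if t ≤ m then (1 : ℝ≥0∞) else 0) = m := by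
  have hfilter : {t ∈ Finset.Icc 1 N | t ≤ m} = Finset.Icc 1 m := by
    ext t
    simp only [Finset.mem_filter, Finset.mem_Icc]
    omega
  simp [Finset.sum_boole, hfilter]

theorem MeasureTheory.lintegral_natCast_le_sum_measure_le {Ω : Type*} [MeasurableSpace Ω]
    (μ : Measure Ω) {T : Ω → ℕ} {N : ℕ} (hT : ∀ ω, T ω ≤ N) :
    ∫⁻ ω, (T ω : ℝ≥0∞) ∂μ ≤ ∑ t ∈ Finset.Icc 1 N, μ {ω | t ≤ T ω} := by
  calc ∫⁻ ω, (T ω : ℝ≥0∞) ∂μ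
      = ∫⁻ ω, ∑ t ∈ Finset.Icc 1 N, {ω | t ≤ T ω}.indicator 1 ω ∂μ := by
        simp only [Set.indicator_apply, Set.mem_ofPred_eq, Pi.one_apply,
          Finset.sum_Icc_one_ite_le (hT _)]
    -- `T` need not be measurable, so each level set is replaced by a measurable hull.
    _ ≤ ∫⁻ ω, ∑ t ∈ Finset.Icc 1 N, (toMeasurable μ {ω | t ≤ T ω}).indicator 1 ω ∂μ :=
        lintegral_mono fun ω => Finset.sum_le_sum fun t _ =>
          Set.indicator_le_indicator_of_subset (subset_toMeasurable _ _) (fun _ => zero_le_one) ω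
    _ = ∑ t ∈ Finset.Icc 1 N, μ {ω | t ≤ T ω} := by
        rw [lintegral_finsetSum _ fun t _ =>
          measurable_one.indicator (measurableSet_toMeasurable _ _)]
        simp only [lintegral_indicator_one (measurableSet_toMeasurable _ _),
          measure_toMeasurable]

theorem ENNReal.sum_Icc_ofReal_div_natCast_le {c : ℝ} (hc : 0 ≤ c) (N : ℕ) :
    ∑ t ∈ Finset.Icc 1 N, ENNReal.ofReal (c / t) ≤ ENNReal.ofReal (c * (1 + Real.log N)) := by
  rw [← ENNReal.ofReal_sum_of_nonneg fun t _ => by positivity]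
  refine ENNReal.ofReal_le_ofReal ?_
  calc ∑ t ∈ Finset.Icc 1 N, c / t = c * harmonic N := by
        simp [harmonic_eq_sum_Icc, Finset.mul_sum, div_eq_mul_inv]
    _ ≤ c * (1 + Real.log N) := mul_le_mul_of_nonneg_left (harmonic_le_one_add_log N) hc

theorem Real.log_factorial_le (n : ℕ) : Real.log n ! ≤ n * Real.log n := by
  rw [← Real.log_pow]
  exact Real.log_le_log (by positivity) (by exact_mod_cast Nat.factorial_le_pow n)

theorem Real.one_le_natCast_mul_log {n : ℕ} (hn : 2 ≤ n) : 1 ≤ n * Real.log n := by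
  have hn' : (2 : ℝ) ≤ n := by exact_mod_cast hn
  have hlog : Real.log 2 ≤ Real.log n := Real.log_le_log (by norm_num) hn'
  nlinarith [Real.log_two_gt_d9]

theorem MeasureTheory.lintegral_natCast_le_of_measure_le_inv_add {Ω : Type*} [MeasurableSpace Ω]
    (μ : Measure Ω) {T : Ω → ℕ} {N : ℕ} (hN : N ≠ 0) (hT : ∀ ω, T ω ≤ N) {c : ℝ} (hc : 0 ≤ c)
    (htail : ∀ t : ℕ, 1 ≤ t → μ {ω | t ≤ T ω} ≤ (N : ℝ≥0∞)⁻¹ + ENNReal.ofReal (c / t)) :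
    ∫⁻ ω, (T ω : ℝ≥0∞) ∂μ ≤ ENNReal.ofReal (1 + c * (1 + Real.log N)) := by
  calc ∫⁻ ω, (T ω : ℝ≥0∞) ∂μ
      ≤ ∑ t ∈ Finset.Icc 1 N, μ {ω | t ≤ T ω} := lintegral_natCast_le_sum_measure_le μ hT
    _ ≤ ∑ t ∈ Finset.Icc 1 N, ((N : ℝ≥0∞)⁻¹ + ENNReal.ofReal (c / t)) :=
        Finset.sum_le_sum fun t ht => htail t (Finset.mem_Icc.mp ht).1
    _ = 1 + ∑ t ∈ Finset.Icc 1 N, ENNReal.ofReal (c / t) := by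
        rw [Finset.sum_add_distrib, Finset.sum_const, Nat.card_Icc, Nat.add_sub_cancel,
          nsmul_eq_mul, ENNReal.mul_inv_cancel (by exact_mod_cast hN) (ENNReal.natCast_ne_top N)]
    _ ≤ 1 + ENNReal.ofReal (c * (1 + Real.log N)) := by
        gcongr
        exact ENNReal.sum_Icc_ofReal_div_natCast_le hc N
    _ = ENNReal.ofReal (1 + c * (1 + Real.log N)) := by
        have hlog : 0 ≤ 1 + Real.log N := by linarith [Real.log_natCast_nonneg N]
        rw [ENNReal.ofReal_add zero_le_one (mul_nonneg hc hlog), ENNReal.ofReal_one]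

/-- Abstract form of the running-time bound via the smallest improvement. There is a universal
constant `C` such that: whenever, on a probability space, `T` is the length of the longest path
in the 2-opt state graph (so `T ≤ n!` always, and on the good event `G` — "every tour has length
at most `L`", which has probability at least `1 - 1/n!` — a path of length `t ≥ 1` forces the
minimum improvement `Δ_min ≤ L/t`), and `P(Δ_min ≤ ε) ≤ P·ε` for all `ε > 0` with `P·L ≥ 1`,
then `E[T] ≤ C·P·L·n·log n`. -/
theorem stmt16 : ∃ C : ℝ, 0 < C ∧
    ∀ (Ω : Type) (_ : MeasureSpace Ω), IsProbabilityMeasure (volume : Measure Ω) →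
    ∀ (n : ℕ), 2 ≤ n → ∀ (L P : ℝ), 0 < L → 0 < P → 1 ≤ P * L →
    ∀ (T : Ω → ℕ) (Δ : Ω → ℝ) (G : Set Ω),
      (∀ ω, T ω ≤ n !) →
      (volume : Measure Ω) Gᶜ ≤ (↑(n !) : ℝ≥0∞)⁻¹ →
      (∀ ω ∈ G, ∀ t : ℕ, 1 ≤ t → t ≤ T ω → Δ ω ≤ L / t) →
      (∀ ε : ℝ, 0 < ε → (volume : Measure Ω) {ω | Δ ω ≤ ε} ≤ ENNReal.ofReal (P * ε)) →
      ∫ ω, (T ω : ℝ) ≤ C * (P * L * n * Real.log n) := by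
  refine ⟨3, by norm_num, ?_⟩
  intro Ω _ _ n hn L P hL hP hPL T Δ G hT hGc hpath hΔ
  have htail : ∀ t : ℕ, 1 ≤ t →
      volume {ω | t ≤ T ω} ≤ (n ! : ℝ≥0∞)⁻¹ + ENNReal.ofReal (P * L / t) := by
    intro t ht
    have hsub : {ω | t ≤ T ω} ⊆ Gᶜ ∪ {ω | Δ ω ≤ L / t} := fun ω hω => by
      by_cases hG : ω ∈ G
      · exact Or.inr (hpath ω hG t ht hω)
      · exact Or.inl hG
    calc volume {ω | t ≤ T ω} ≤ volume Gᶜ + volume {ω | Δ ω ≤ L / t} :=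
          (measure_mono hsub).trans (measure_union_le _ _)
      _ ≤ (n ! : ℝ≥0∞)⁻¹ + ENNReal.ofReal (P * L / t) := by
          rw [mul_div_assoc]
          exact add_le_add hGc (hΔ _ (by positivity))
  have hlintegral := lintegral_natCast_le_of_measure_le_inv_add volume (factorial_ne_zero n) hT
    (mul_pos hP hL).le htail
  have hbound : 1 + P * L * (1 + Real.log n !) ≤ 3 * (P * L * n * Real.log n) := by
    nlinarith [Real.log_factorial_le n, Real.one_le_natCast_mul_log hn]
  calc ∫ ω, (T ω : ℝ) ≤ ‖∫ ω, (T ω : ℝ)‖ := Real.le_norm_self _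
    _ ≤ (∫⁻ ω, ENNReal.ofReal ‖(T ω : ℝ)‖).toReal := norm_integral_le_lintegral_norm _
    _ ≤ 3 * (P * L * n * Real.log n) := by
        refine ENNReal.toReal_le_of_le_ofReal (le_trans (by positivity) hbound) ?_
        simp only [Real.norm_natCast, ENNReal.ofReal_natCast]
        exact hlintegral.trans (ENNReal.ofReal_le_ofReal hbound)
end
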